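/- Let $M_0 \geq 2$ and $\delta_0 > 0$ be constants, and let $\{A_k\}_{k=1}^\infty$ be a sequence of nonnegative reals satisfying $A_1 \leq M_0\delta_0^2$ and $A_{k+1} \leq M_0\delta_0^{2^{k+1}} + M_0^k A_k^2$ for all $k \geq 1$. Then $A_k \leq M_0^{-(k+2)}(M_0^4\delta_0^2)^{2^{k-1}}$ for all $k \geq 1$. -/

import Mathlib

/-!
Write `c k = (M₀⁴ δ₀²) ^ 2 ^ (k - 1) / M₀ ^ (k + 2)` (`doublyExpBound`) for the claimed bound. It is built so that the
quadratic term of the recurrence reproduces it exactly up to a factor `1 / M₀`: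
`M₀ ^ k * c k ^ 2 = c (k + 1) / M₀`. The forcing term `M₀ δ₀ ^ 2 ^ (k + 1)` is also at most
`c (k + 1) / M₀`, because `c (k + 1) = M₀ ^ (4 · 2 ^ k - k - 3) δ₀ ^ 2 ^ (k + 1)` and the exponent of
`M₀` grows exponentially. As `M₀ ≥ 2`, the two halves add up to at most `c (k + 1)`, and induction
on `k` closes the argument.
-/

theorem le_of_quadratic_recurrence (A b w c : ℕ → ℝ) (hA : ∀ k, 1 ≤ k → 0 ≤ A k)
    (hw : ∀ k, 0 ≤ w k) (h1 : A 1 ≤ c 1)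
    (hrec : ∀ k, 1 ≤ k → A (k + 1) ≤ b k + w k * A k ^ 2)
    (hc : ∀ k, 1 ≤ k → b k + w k * c k ^ 2 ≤ c (k + 1)) :
    ∀ k, 1 ≤ k → A k ≤ c k := by
  intro k hk
  induction k, hk using Nat.le_induction with
  | base => exact h1
  | succ k hk ih =>
    calc A (k + 1) ≤ b k + w k * A k ^ 2 := hrec k hk
      _ ≤ b k + w k * c k ^ 2 := by gcongr; exacts [hw k, hA k hk]
      _ ≤ c (k + 1) := hc k hk

noncomputable def doublyExpBound (M δ : ℝ) (k : ℕ) : ℝ :=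
  (M ^ 4 * δ ^ 2) ^ 2 ^ (k - 1) / M ^ (k + 2)

namespace doublyExpBound

variable {M : ℝ} (δ : ℝ)

theorem one (hM : M ≠ 0) : doublyExpBound M δ 1 = M * δ ^ 2 := by
  simp only [doublyExpBound]
  field_simp
  ring

theorem nonneg (hM : 0 < M) (k : ℕ) : 0 ≤ doublyExpBound M δ k := by
  unfold doublyExpBound
  positivity

theorem pow_mul_sq_eq_div (hM : M ≠ 0) (n : ℕ) :
    M ^ (n + 1) * doublyExpBound M δ (n + 1) ^ 2 = doublyExpBound M δ (n + 2) / M := by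
  simp only [doublyExpBound, Nat.add_sub_cancel, show n + 2 - 1 = n + 1 by omega]
  field_simp
  ring

theorem mul_pow_le_div (hM : 1 ≤ M) (n : ℕ) :
    M * δ ^ 2 ^ (n + 2) ≤ doublyExpBound M δ (n + 2) / M := by
  have hM₀ : 0 < M := one_pos.trans_le hM
  have hexp : n + 6 ≤ 8 * 2 ^ n := by
    have := n.lt_two_pow_self
    omega
  have hδ : 0 ≤ δ ^ 2 ^ (n + 2) := Even.pow_nonneg (Nat.even_pow.mpr ⟨even_two, by omega⟩) δ
  have hsplit : (M ^ 4 * δ ^ 2) ^ 2 ^ (n + 1) = M ^ (8 * 2 ^ n) * δ ^ 2 ^ (n + 2) := by ring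
  rw [doublyExpBound, show n + 2 - 1 = n + 1 by omega, hsplit, div_div, le_div_iff₀ (by positivity)]
  calc M * δ ^ 2 ^ (n + 2) * (M ^ (n + 2 + 2) * M) = M ^ (n + 6) * δ ^ 2 ^ (n + 2) := by ring
    _ ≤ M ^ (8 * 2 ^ n) * δ ^ 2 ^ (n + 2) := by gcongr

theorem add_le_succ (hM : 2 ≤ M) (k : ℕ) (hk : 1 ≤ k) :
    M * δ ^ 2 ^ (k + 1) + M ^ k * doublyExpBound M δ k ^ 2 ≤ doublyExpBound M δ (k + 1) := by
  obtain ⟨n, rfl⟩ := Nat.exists_eq_add_of_le' hk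
  have hM₀ : 0 < M := two_pos.trans_le hM
  have hc := nonneg δ hM₀ (n + 2)
  rw [pow_mul_sq_eq_div δ hM₀.ne']
  calc M * δ ^ 2 ^ (n + 2) + doublyExpBound M δ (n + 2) / M
      ≤ 2 * doublyExpBound M δ (n + 2) / M := by
        rw [two_mul, add_div]
        gcongr
        exact mul_pow_le_div δ (one_le_two.trans hM) n
    _ ≤ doublyExpBound M δ (n + 2) := by
        rw [div_le_iff₀ hM₀]
        nlinarith

end doublyExpBound

theorem stmt_0_general (M₀ δ₀ : ℝ) (hM : 2 ≤ M₀)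
    (A : ℕ → ℝ) (hA : ∀ k, 1 ≤ k → 0 ≤ A k)
    (h1 : A 1 ≤ M₀ * δ₀ ^ 2)
    (hrec : ∀ k, 1 ≤ k → A (k + 1) ≤ M₀ * δ₀ ^ (2 ^ (k + 1)) + M₀ ^ k * (A k) ^ 2) :
    ∀ k, 1 ≤ k → A k ≤ M₀ ^ (-(k + 2 : ℤ)) * (M₀ ^ 4 * δ₀ ^ 2) ^ (2 ^ (k - 1)) := by
  have hM₀ : M₀ ≠ 0 := (two_pos.trans_le hM).ne'
  have hbound := le_of_quadratic_recurrence A _ (fun k ↦ M₀ ^ k) (doublyExpBound M₀ δ₀) hA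
    (fun k ↦ pow_nonneg (zero_le_two.trans hM) k) (doublyExpBound.one δ₀ hM₀ ▸ h1) hrec
    (doublyExpBound.add_le_succ δ₀ hM)
  intro k hk
  have hzpow : M₀ ^ (-(k + 2 : ℤ)) = (M₀ ^ (k + 2))⁻¹ := by
    rw [zpow_neg, ← zpow_natCast]
    push_cast
    rfl
  rw [hzpow, inv_mul_eq_div]
  exact hbound k hk

theorem stmt_0 (M₀ δ₀ : ℝ) (hM : 2 ≤ M₀) (hδ : 0 < δ₀)
    (A : ℕ → ℝ) (hA : ∀ k, 1 ≤ k → 0 ≤ A k)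
    (h1 : A 1 ≤ M₀ * δ₀ ^ 2)
    (hrec : ∀ k, 1 ≤ k → A (k + 1) ≤ M₀ * δ₀ ^ (2 ^ (k + 1)) + M₀ ^ k * (A k) ^ 2) :
    ∀ k, 1 ≤ k → A k ≤ M₀ ^ (-(k + 2 : ℤ)) * (M₀ ^ 4 * δ₀ ^ 2) ^ (2 ^ (k - 1)) :=
  stmt_0_general M₀ δ₀ hM A hA h1 hrec
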